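/- Compute: (4/π²) ∫₀^{π/2} ∫_π^{3π/2} (α(θ,ψ)/(2π))² dψ dθ = 17/96, where α(θ,ψ) = ψ - θ if ψ ≤ θ + π and α(θ,ψ) = 2π + θ - ψ otherwise. -/

import Mathlib

open Real intervalIntegral

/-!
For fixed `θ`, the integrand is the square of an affine function of `ψ` on either side of the
kink `ψ = θ + π`, so the inner integral is a cubic polynomial in `θ`; integrating that
polynomial over `[0, π/2]` is elementary.
-/

open MeasureTheory in
theorem intervalIntegral.integral_ite_le {E : Type*} [NormedAddCommGroup E] [NormedSpace ℝ E]
    {μ : Measure ℝ} {f g : ℝ → E} {a b c : ℝ} (hac : a ≤ c) (hcb : c ≤ b)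
    (hf : IntervalIntegrable f μ a c) (hg : IntervalIntegrable g μ c b) :
    ∫ x in a..b, (if x ≤ c then f x else g x) ∂μ = (∫ x in a..c, f x ∂μ) + ∫ x in c..b, g x ∂μ := by
  have hleft : Set.EqOn (fun x => if x ≤ c then f x else g x) f (Set.uIoc a c) := fun x hx => by
    rw [Set.uIoc_of_le hac] at hx
    exact if_pos hx.2
  have hright : Set.EqOn (fun x => if x ≤ c then f x else g x) g (Set.uIoc c b) := fun x hx => by
    rw [Set.uIoc_of_le hcb] at hx
    exact if_neg (not_le.2 hx.1)
  rw [← integral_add_adjacent_intervals ((intervalIntegrable_congr hleft).2 hf)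
    ((intervalIntegrable_congr hright).2 hg), integral_congr_ae (.of_forall hleft),
    integral_congr_ae (.of_forall hright)]

theorem integral_sub_sq (a b d : ℝ) :
    ∫ x in a..b, (x - d) ^ 2 = ((b - d) ^ 3 - (a - d) ^ 3) / 3 := by
  norm_num [integral_comp_sub_right fun x => x ^ 2]

theorem integral_sq_angle_div_two_pi {θ : ℝ} (hθ : θ ∈ Set.Icc 0 (π / 2)) :
    ∫ ψ in π..(3 * π / 2), ((if ψ ≤ θ + π then ψ - θ else 2 * π + θ - ψ) / (2 * π)) ^ 2
      = (2 * π ^ 3 - (π - θ) ^ 3 - (θ + π / 2) ^ 3) / (12 * π ^ 2) := by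
  have hsq : ∀ ψ, ((if ψ ≤ θ + π then ψ - θ else 2 * π + θ - ψ) / (2 * π)) ^ 2
      = (if ψ ≤ θ + π then (ψ - θ) ^ 2 else (ψ - (2 * π + θ)) ^ 2) / (2 * π) ^ 2 := fun ψ => by
    split_ifs <;> ring
  simp_rw [hsq]
  rw [integral_div, integral_ite_le (by linarith [hθ.1]) (by linarith [hθ.2])
    (Continuous.intervalIntegrable (by fun_prop) _ _)
    (Continuous.intervalIntegrable (by fun_prop) _ _), integral_sub_sq, integral_sub_sq]
  field_simp
  ring

theorem width2_transition_integral_1 :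
    (4 / π ^ 2) *
      ∫ θ in (0 : ℝ)..(π / 2), ∫ ψ in (π)..(3 * π / 2),
        ((if ψ ≤ θ + π then ψ - θ else 2 * π + θ - ψ) / (2 * π)) ^ 2 = 17 / 96 := by
  rw [integral_congr fun θ hθ => integral_sq_angle_div_two_pi <| by rwa [Set.uIcc_of_le (by positivity)] at hθ,
    integral_div, integral_sub, integral_sub, integral_comp_sub_left fun x => x ^ 3,
    integral_comp_add_right fun x => x ^ 3]
  · simp only [integral_const, integral_pow]
    field_simp
    ring
  all_goals exact Continuous.intervalIntegrable (by fun_prop) _ _
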